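/- arXiv:2104.08534 — 5 statements merged into one kernel-verified Lean document; each statement's English description precedes it below -/
import Mathlib

section
/- Let D be a compact subset of the Euclidean plane (EuclideanSpace ℝ (Fin 2)) with −D = D, star-shaped about the origin (for every x ∈ D the segment from 0 to x is contained in D), and with 0 ∉ frontier D. Let c : ℝ → EuclideanSpace ℝ (Fin 2) be a differentiable curve, periodic with period T > 0, whose range equals frontier D. Then there exist real numbers t₀ and t₁ such that ‖c t₀‖ = ⨆ t, ‖c t‖ and ‖c t₁‖ = ⨅ t, ‖c t‖, and for each i ∈ {0,1}: the inner product ⟪c tᵢ, deriv c tᵢ⟫ = 0, the segment joining −c tᵢ to c tᵢ is contained in D, and there exists sᵢ with c sᵢ = −c tᵢ and ⟪c sᵢ, deriv c sᵢ⟫ = 0. (In billiard language: a centrally symmetric star-shaped plane domain has at least two bouncing ball orbits through the origin, obtained from the maximizer and minimizer of the distance to the origin along the boundary.) -/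
/-!
Since `D` is compact, so is its frontier, the range of `c`; hence `‖c‖` attains its maximum
and its minimum, at `t₀` and `t₁`. At an extremum of `‖c‖` the derivative of `‖c‖²`, namely
`2 ⟪c, c'⟫`, vanishes, so the radial chord meets the boundary orthogonally there. Central
symmetry makes `-c tᵢ` a boundary point with the same norm, hence again an extremum, and
star-shapedness puts both halves of the chord `[-c tᵢ, c tᵢ]` into `D`.
-/

open Set
open scoped RealInnerProductSpace

theorem frontier_neg {G : Type*} [TopologicalSpace G] [InvolutiveNeg G] [ContinuousNeg G]
    (s : Set G) : frontier (-s) = -frontier s :=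
  ((Homeomorph.neg G).preimage_frontier s).symm

theorem StarConvex.segment_neg_subset {𝕜 E : Type*} [Field 𝕜] [LinearOrder 𝕜]
    [IsStrictOrderedRing 𝕜] [AddCommGroup E] [Module 𝕜 E] {s : Set E}
    (hs : StarConvex 𝕜 0 s) (hsym : -s = s) {x : E} (hx : x ∈ s) : segment 𝕜 (-x) x ⊆ s := by
  have hnx : -x ∈ s := by rw [← hsym]; simpa using hx
  rintro _ ⟨a, b, ha, hb, hab, rfl⟩
  rcases le_total a b with hle | hle
  · rw [show a • -x + b • x = (b - a) • x by rw [smul_neg, sub_smul]; abel]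
    exact starConvex_zero_iff.1 hs hx (by linarith) (by linarith)
  · rw [show a • -x + b • x = (a - b) • -x by rw [smul_neg, smul_neg, sub_smul]; abel]
    exact starConvex_zero_iff.1 hs hnx (by linarith) (by linarith)

theorem isExtrOn_norm_neg {E : Type*} [SeminormedAddGroup E] {s : Set E} {x : E}
    (h : IsExtrOn norm s x) : IsExtrOn norm s (-x) := by
  rcases h with h | h
  · exact Or.inl fun _ hy => (norm_neg x).trans_le (h hy)
  · exact Or.inr fun _ hy => (h hy).trans_eq (norm_neg x).symm

section Extremum

variable {E : Type*} [NormedAddCommGroup E] [InnerProductSpace ℝ E] {c : ℝ → E}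

theorem IsLocalExtr.inner_deriv_eq_zero {t : ℝ} (h : IsLocalExtr (‖c ·‖) t)
    (hc : DifferentiableAt ℝ c t) : ⟪c t, deriv c t⟫ = 0 := by
  have hsq : IsLocalExtr (‖c ·‖ ^ 2) t := by
    rcases h with h | h
    · exact Or.inl (h.mono fun s hs => pow_le_pow_left₀ (norm_nonneg _) hs 2)
    · exact Or.inr (h.mono fun s hs => pow_le_pow_left₀ (norm_nonneg _) hs 2)
  simpa using hsq.hasDerivAt_eq_zero hc.hasDerivAt.norm_sq

theorem IsExtrOn.inner_deriv_eq_zero_of_range {t : ℝ} (h : IsExtrOn norm (range c) (c t))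
    (hc : DifferentiableAt ℝ c t) : ⟪c t, deriv c t⟫ = 0 :=
  ((h.comp_mapsTo (mapsTo_range c univ) rfl).isLocalExtr Filter.univ_mem).inner_deriv_eq_zero hc

theorem bouncing_ball_of_isExtrOn_norm {D : Set E} (hD : IsClosed D) (hsym : -D = D)
    (hstar : StarConvex ℝ 0 D) (hc : Differentiable ℝ c) (hrange : range c = frontier D)
    {t : ℝ} (ht : IsExtrOn norm (frontier D) (c t)) :
    ⟪c t, deriv c t⟫ = 0 ∧ segment ℝ (-c t) (c t) ⊆ D ∧ ∃ s, c s = -c t ∧ ⟪c s, deriv c s⟫ = 0 := by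
  have hct : c t ∈ frontier D := hrange ▸ mem_range_self t
  obtain ⟨s, hs⟩ : -c t ∈ range c := by
    rw [hrange, ← hsym, frontier_neg, neg_mem_neg]
    exact hct
  rw [← hrange] at ht
  refine ⟨ht.inner_deriv_eq_zero_of_range (hc t),
    hstar.segment_neg_subset hsym (hD.frontier_subset hct), s, hs, ?_⟩
  exact (hs ▸ isExtrOn_norm_neg ht).inner_deriv_eq_zero_of_range (hc s)

end Extremum

theorem stmt0_general (D : Set (EuclideanSpace ℝ (Fin 2))) (hD : IsCompact D)
    (hsym : -D = D) (hstar : ∀ x ∈ D, segment ℝ 0 x ⊆ D)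
    (c : ℝ → EuclideanSpace ℝ (Fin 2)) (hc : Differentiable ℝ c)
    (hrange : Set.range c = frontier D) :
    ∃ t₀ t₁ : ℝ,
      ‖c t₀‖ = (⨆ t, ‖c t‖) ∧ ‖c t₁‖ = (⨅ t, ‖c t‖) ∧
      (inner ℝ (c t₀) (deriv c t₀) = (0 : ℝ)) ∧
      segment ℝ (-(c t₀)) (c t₀) ⊆ D ∧
      (∃ s₀ : ℝ, c s₀ = -(c t₀) ∧ inner ℝ (c s₀) (deriv c s₀) = (0 : ℝ)) ∧
      (inner ℝ (c t₁) (deriv c t₁) = (0 : ℝ)) ∧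
      segment ℝ (-(c t₁)) (c t₁) ⊆ D ∧
      (∃ s₁ : ℝ, c s₁ = -(c t₁) ∧ inner ℝ (c s₁) (deriv c s₁) = (0 : ℝ)) := by
  have hK : IsCompact (frontier D) :=
    hD.of_isClosed_subset isClosed_frontier hD.isClosed.frontier_subset
  have hne : (frontier D).Nonempty := hrange ▸ range_nonempty c
  have hstar' : StarConvex ℝ 0 D := starConvex_iff_segment_subset.2 hstar
  obtain ⟨_, ⟨t₀, rfl⟩, hmax⟩ := hrange ▸ hK.exists_isMaxOn hne continuous_norm.continuousOn
  obtain ⟨_, ⟨t₁, rfl⟩, hmin⟩ := hrange ▸ hK.exists_isMinOn hne continuous_norm.continuousOn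
  have hmax' : ∀ t, ‖c t‖ ≤ ‖c t₀‖ := fun t => hmax (mem_range_self t)
  have hmin' : ∀ t, ‖c t₁‖ ≤ ‖c t‖ := fun t => hmin (mem_range_self t)
  rw [hrange] at hmax hmin
  obtain ⟨h₀, hseg₀, hs₀⟩ := bouncing_ball_of_isExtrOn_norm hD.isClosed hsym hstar' hc hrange
    hmax.isExtr
  obtain ⟨h₁, hseg₁, hs₁⟩ := bouncing_ball_of_isExtrOn_norm hD.isClosed hsym hstar' hc hrange
    hmin.isExtr
  exact ⟨t₀, t₁,
    (ciSup_eq_of_forall_le_of_forall_lt_exists_gt hmax' fun _ hw => ⟨t₀, hw⟩).symm,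
    (ciInf_eq_of_forall_ge_of_forall_gt_exists_lt hmin' fun _ hw => ⟨t₁, hw⟩).symm,
    h₀, hseg₀, hs₀, h₁, hseg₁, hs₁⟩

/-- A compact, centrally symmetric, star-shaped (about the origin) plane
domain with `0 ∉ frontier D` has at least two bouncing ball orbits through the origin,
obtained from the maximizer and the minimizer of the distance to the origin along a
periodic differentiable parametrization of the boundary. -/
theorem stmt0 (D : Set (EuclideanSpace ℝ (Fin 2))) (hD : IsCompact D)
    (hsym : -D = D) (hstar : ∀ x ∈ D, segment ℝ 0 x ⊆ D)
    (h0 : (0 : EuclideanSpace ℝ (Fin 2)) ∉ frontier D)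
    (c : ℝ → EuclideanSpace ℝ (Fin 2)) (hc : Differentiable ℝ c)
    (T : ℝ) (hT : 0 < T) (hper : Function.Periodic c T)
    (hrange : Set.range c = frontier D) :
    ∃ t₀ t₁ : ℝ,
      ‖c t₀‖ = (⨆ t, ‖c t‖) ∧ ‖c t₁‖ = (⨅ t, ‖c t‖) ∧
      (inner ℝ (c t₀) (deriv c t₀) = (0 : ℝ)) ∧
      segment ℝ (-(c t₀)) (c t₀) ⊆ D ∧
      (∃ s₀ : ℝ, c s₀ = -(c t₀) ∧ inner ℝ (c s₀) (deriv c s₀) = (0 : ℝ)) ∧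
      (inner ℝ (c t₁) (deriv c t₁) = (0 : ℝ)) ∧
      segment ℝ (-(c t₁)) (c t₁) ⊆ D ∧
      (∃ s₁ : ℝ, c s₁ = -(c t₁) ∧ inner ℝ (c s₁) (deriv c s₁) = (0 : ℝ)) :=
  stmt0_general D hD hsym hstar c hc hrange
end

section
/- Let L > 0, let r ≥ 1 be an integer, and let f₊, f₋ : ℝ → ℝ be twice continuously differentiable with f₊ 0 = L/2, f₋ 0 = −L/2, deriv f₊ 0 = 0 = deriv f₋ 0, and (deriv (deriv f₋)) 0 = −(deriv (deriv f₊)) 0. For p : ZMod (2r) let f_p := f₊ if p.val is even and f_p := f₋ if p.val is odd (this is well defined since 2r is even), and define the length functional 𝓛 : (ZMod (2r) → ℝ) → ℝ by 𝓛 x = ∑_{p : ZMod (2r)} Real.sqrt ((x (p+1) − x p)² + (f_{p+1} (x (p+1)) − f_p (x p))²). Set a := −2(1 + L·(deriv (deriv f₊)) 0). Then 0 is a critical point of 𝓛 (the Fréchet derivative of 𝓛 at 0 vanishes), and for all p, q : ZMod (2r) the second partial derivative ∂²𝓛/∂x_p∂x_q at 0 (i.e., iteratedFDeriv ℝ 2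 𝓛 0 applied to the coordinate basis vectors e_p, e_q) equals the (p,q) entry of the matrix (−1/L) • A(a). -/
open Matrix

/-- The cyclic shift permutation matrix `S p q = 1` if `q = p + 1`, else `0`. -/
noncomputable def shiftMat (n : ℕ) : Matrix (ZMod n) (ZMod n) ℝ :=
  fun p q => if q = p + 1 then 1 else 0

/-- The symmetric circulant matrix `A(a) = a•1 + S + Sᵀ`. -/
noncomputable def Amat (n : ℕ) (a : ℝ) : Matrix (ZMod n) (ZMod n) ℝ :=
  a • 1 + shiftMat n + (shiftMat n)ᵀ

/-!
Side `p` of the polygon contributes `√Q_p` with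
`Q_p x = (x (p+1) - x p)² + (f_{p+1} (x (p+1)) - f_p (x p))²`. At `x = 0` every side is the
vertical segment of length `L`, which meets both graphs orthogonally, so `Q_p` is critical at `0`.
Hence `0` is critical for `𝓛`, and the Hessian of `√Q_p` at `0` is `Hess Q_p / (2 L)`. As the
graphs are horizontal at `0`, only the linear part `x (p+1) - x p` and the curvature terms
`(f_{p+1} 0 - f_p 0) f''(0) = ± L f₊''(0)` survive, so side `p` contributes
`(1/L) (u (p+1) - u p) (v (p+1) - v p) + f₊''(0) (u (p+1) v (p+1) + u p v p)`.
Summing over the cycle gives `(1/L) (2 - S - Sᵀ) + 2 f₊''(0) = (-1/L) A(a)`.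
-/

open Filter Topology ContinuousLinearMap

section SecondDerivative

variable {E F : Type*} [NormedAddCommGroup E] [NormedSpace ℝ E] [NormedAddCommGroup F]
  [NormedSpace ℝ F] {x₀ : E}

theorem hasFDerivAt_fderiv_sum {ι : Type*} {s : Finset ι} {f : ι → E → F}
    {H : ι → E →L[ℝ] E →L[ℝ] F} (hf : ∀ i ∈ s, ∀ᶠ x in 𝓝 x₀, DifferentiableAt ℝ (f i) x)
    (hH : ∀ i ∈ s, HasFDerivAt (fderiv ℝ (f i)) (H i) x₀) :
    HasFDerivAt (fderiv ℝ fun x => ∑ i ∈ s, f i x) (∑ i ∈ s, H i) x₀ := by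
  have hfderiv : fderiv ℝ (fun x => ∑ i ∈ s, f i x) =ᶠ[𝓝 x₀] ∑ i ∈ s, fderiv ℝ (f i) :=
    ((eventually_all_finset s).2 hf).mono fun x hx => by
      simpa only [Finset.sum_apply] using fderiv_fun_sum hx
  exact (HasFDerivAt.sum hH).congr_of_eventuallyEq hfderiv

variable {Q : E → ℝ} {Q' : E → E →L[ℝ] ℝ}

theorem eventually_hasFDerivAt_sqrt (hQ : ∀ᶠ x in 𝓝 x₀, HasFDerivAt Q (Q' x) x)
    (hpos : 0 < Q x₀) :
    ∀ᶠ x in 𝓝 x₀, HasFDerivAt (fun y => √(Q y)) ((1 / (2 * √(Q x))) • Q' x) x := by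
  have hQpos : ∀ᶠ x in 𝓝 x₀, 0 < Q x :=
    hQ.self_of_nhds.continuousAt.eventually (lt_mem_nhds hpos)
  filter_upwards [hQ, hQpos] with x hx hxpos using hx.sqrt hxpos.ne'

theorem hasFDerivAt_fderiv_sqrt_of_critical {Q'' : E →L[ℝ] E →L[ℝ] ℝ}
    (hQ : ∀ᶠ x in 𝓝 x₀, HasFDerivAt Q (Q' x) x) (hQ' : HasFDerivAt Q' Q'' x₀)
    (hcrit : Q' x₀ = 0) (hpos : 0 < Q x₀) :
    HasFDerivAt (fderiv ℝ fun x => √(Q x)) ((1 / (2 * √(Q x₀))) • Q'') x₀ := by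
  have hfderiv : fderiv ℝ (fun x => √(Q x)) =ᶠ[𝓝 x₀] fun x => (1 / (2 * √(Q x))) • Q' x :=
    (eventually_hasFDerivAt_sqrt hQ hpos).mono fun x hx => hx.fderiv
  have hc : DifferentiableAt ℝ (fun x => 1 / (2 * √(Q x))) x₀ := by
    simpa only [one_div] using
      ((hQ.self_of_nhds.differentiableAt.sqrt hpos.ne').const_mul 2).fun_inv (by positivity)
  refine ((hc.hasFDerivAt.smul hQ').congr_of_eventuallyEq hfderiv).congr_fderiv ?_
  -- the derivative of the factor `1 / (2 √Q)` only ever meets `Q' x₀ = 0`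
  simp [hcrit]

end SecondDerivative

section Chord

variable {ι : Type*} {f g : ℝ → ℝ} {i j : ι} {x₀ : ι → ℝ}

local notation "π" => (ContinuousLinearMap.proj : ι → (ι → ℝ) →L[ℝ] ℝ)

def chordSq (f g : ℝ → ℝ) (i j : ι) (x : ι → ℝ) : ℝ :=
  (x j - x i) ^ 2 + (g (x j) - f (x i)) ^ 2

noncomputable def chordLength (f g : ℝ → ℝ) (i j : ι) (x : ι → ℝ) : ℝ :=
  √(chordSq f g i j x)

noncomputable def chordSqDeriv [Fintype ι] (f g : ℝ → ℝ) (i j : ι) (x : ι → ℝ) :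
    (ι → ℝ) →L[ℝ] ℝ :=
  (2 * (x j - x i)) • (π j - π i) +
    (2 * (g (x j) - f (x i))) • (deriv g (x j) • π j - deriv f (x i) • π i)

theorem hasFDerivAt_apply_comp [Fintype ι] {h : ℝ → ℝ} {h' : ℝ} {x : ι → ℝ} (i : ι)
    (hh : HasDerivAt h h' (x i)) :
    HasFDerivAt (fun y : ι → ℝ => h (y i)) (h' • π i) x :=
  hh.comp_hasFDerivAt x (hasFDerivAt_apply i x)

theorem hasFDerivAt_chordSq [Fintype ι] (hf : Differentiable ℝ f) (hg : Differentiable ℝ g)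
    (x : ι → ℝ) :
    HasFDerivAt (chordSq f g i j) (chordSqDeriv f g i j x) x := by
  have hA : HasFDerivAt (fun y : ι → ℝ => y j - y i) (π j - π i) x :=
    (hasFDerivAt_apply j x).sub (hasFDerivAt_apply i x)
  have hB : HasFDerivAt (fun y : ι → ℝ => g (y j) - f (y i))
      (deriv g (x j) • π j - deriv f (x i) • π i) x :=
    (hasFDerivAt_apply_comp j (hg _).hasDerivAt).sub (hasFDerivAt_apply_comp i (hf _).hasDerivAt)
  refine ((hA.pow 2).add (hB.pow 2)).congr_fderiv ?_
  ext v
  simp [chordSqDeriv]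

theorem chordSq_of_vertical (hx : x₀ i = x₀ j) :
    chordSq f g i j x₀ = (g (x₀ j) - f (x₀ i)) ^ 2 := by
  simp [chordSq, hx]

theorem chordSqDeriv_of_vertical [Fintype ι] (hx : x₀ i = x₀ j) (hf' : deriv f (x₀ i) = 0)
    (hg' : deriv g (x₀ j) = 0) : chordSqDeriv f g i j x₀ = 0 := by
  rw [← hx] at hg'
  simp [chordSqDeriv, ← hx, hf', hg']

theorem hasFDerivAt_chordSqDeriv_of_vertical [Fintype ι] (hf : Differentiable ℝ f)
    (hg : Differentiable ℝ g) (hf2 : DifferentiableAt ℝ (deriv f) (x₀ i))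
    (hg2 : DifferentiableAt ℝ (deriv g) (x₀ j))
    (hf' : deriv f (x₀ i) = 0) (hg' : deriv g (x₀ j) = 0) :
    HasFDerivAt (chordSqDeriv f g i j)
      ((2 : ℝ) • ((π j - π i).smulRight (π j - π i) +
        (g (x₀ j) - f (x₀ i)) • (deriv (deriv g) (x₀ j) • (π j).smulRight (π j) -
          deriv (deriv f) (x₀ i) • (π i).smulRight (π i)))) x₀ := by
  have hA : HasFDerivAt (fun y : ι → ℝ => 2 * (y j - y i)) ((2 : ℝ) • (π j - π i)) x₀ :=
    ((hasFDerivAt_apply j x₀).fun_sub (hasFDerivAt_apply i x₀)).const_mul (2 : ℝ)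
  have hB : HasFDerivAt (fun y : ι → ℝ => 2 * (g (y j) - f (y i)))
      ((2 : ℝ) • (deriv g (x₀ j) • π j - deriv f (x₀ i) • π i)) x₀ :=
    ((hasFDerivAt_apply_comp j (hg _).hasDerivAt).fun_sub
      (hasFDerivAt_apply_comp i (hf _).hasDerivAt)).const_mul (2 : ℝ)
  have hB' : HasFDerivAt (fun y : ι → ℝ => deriv g (y j) • π j - deriv f (y i) • π i)
      ((deriv (deriv g) (x₀ j) • π j).smulRight (π j) -
        (deriv (deriv f) (x₀ i) • π i).smulRight (π i)) x₀ :=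
    ((hasFDerivAt_apply_comp j hg2.hasDerivAt).smul_const (π j)).fun_sub
      ((hasFDerivAt_apply_comp i hf2.hasDerivAt).smul_const (π i))
  refine ((hA.smul_const (π j - π i)).add (hB.smul hB')).congr_fderiv ?_
  ext u v
  simp [hf', hg']
  ring

theorem eventually_differentiableAt_chordLength [Fintype ι] (hf : Differentiable ℝ f)
    (hg : Differentiable ℝ g) (hpos : 0 < chordSq f g i j x₀) :
    ∀ᶠ x in 𝓝 x₀, DifferentiableAt ℝ (chordLength f g i j) x :=
  (eventually_hasFDerivAt_sqrt (.of_forall fun x => hasFDerivAt_chordSq hf hg x) hpos).mono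
    fun _ hx => hx.differentiableAt

theorem chordSq_pos_of_vertical (hx : x₀ i = x₀ j) (hd : g (x₀ j) ≠ f (x₀ i)) :
    0 < chordSq f g i j x₀ := by
  rw [chordSq_of_vertical hx]
  have := sub_ne_zero.2 hd
  positivity

theorem fderiv_chordLength_of_vertical [Fintype ι] (hf : Differentiable ℝ f)
    (hg : Differentiable ℝ g) (hx : x₀ i = x₀ j) (hf' : deriv f (x₀ i) = 0)
    (hg' : deriv g (x₀ j) = 0) (hd : g (x₀ j) ≠ f (x₀ i)) :
    fderiv ℝ (chordLength f g i j) x₀ = 0 := by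
  have h := (eventually_hasFDerivAt_sqrt (.of_forall fun x => hasFDerivAt_chordSq hf hg x)
    (chordSq_pos_of_vertical hx hd)).self_of_nhds
  rw [chordSqDeriv_of_vertical hx hf' hg', smul_zero] at h
  exact h.fderiv

theorem hasFDerivAt_fderiv_chordLength_of_vertical [Fintype ι] (hf : Differentiable ℝ f)
    (hg : Differentiable ℝ g) (hf2 : DifferentiableAt ℝ (deriv f) (x₀ i))
    (hg2 : DifferentiableAt ℝ (deriv g) (x₀ j)) (hx : x₀ i = x₀ j) (hf' : deriv f (x₀ i) = 0)
    (hg' : deriv g (x₀ j) = 0) (hd : g (x₀ j) ≠ f (x₀ i)) :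
    HasFDerivAt (fderiv ℝ (chordLength f g i j))
      (|g (x₀ j) - f (x₀ i)|⁻¹ • ((π j - π i).smulRight (π j - π i) +
        (g (x₀ j) - f (x₀ i)) • (deriv (deriv g) (x₀ j) • (π j).smulRight (π j) -
          deriv (deriv f) (x₀ i) • (π i).smulRight (π i)))) x₀ := by
  have h := hasFDerivAt_fderiv_sqrt_of_critical
    (.of_forall fun x => hasFDerivAt_chordSq hf hg x)
    (hasFDerivAt_chordSqDeriv_of_vertical hf hg hf2 hg2 hf' hg')
    (chordSqDeriv_of_vertical hx hf' hg') (chordSq_pos_of_vertical hx hd)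
  have hcoeff : 1 / (2 * |g (x₀ j) - f (x₀ i)|) * 2 = |g (x₀ j) - f (x₀ i)|⁻¹ := by
    field_simp
  rwa [chordSq_of_vertical hx, Real.sqrt_sq_eq_abs, smul_smul, hcoeff] at h

theorem hasFDerivAt_fderiv_chordLength_zero [Fintype ι] {L k : ℝ} (hf : ContDiff ℝ 2 f)
    (hg : ContDiff ℝ 2 g) (hf' : deriv f 0 = 0) (hg' : deriv g 0 = 0) (hL : 0 < L)
    (hlen : |g 0 - f 0| = L) (hg'' : (g 0 - f 0) * deriv (deriv g) 0 = L * k)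
    (hf'' : (g 0 - f 0) * deriv (deriv f) 0 = -(L * k)) (i j : ι) :
    HasFDerivAt (fderiv ℝ (chordLength f g i j))
      (L⁻¹ • (π j - π i).smulRight (π j - π i) +
        k • ((π j).smulRight (π j) + (π i).smulRight (π i))) 0 := by
  have hd : g 0 ≠ f 0 := fun h => by simp [h] at hlen; linarith
  have h := hasFDerivAt_fderiv_chordLength_of_vertical (i := i) (j := j) (x₀ := 0)
    (hf.differentiable (by norm_num)) (hg.differentiable (by norm_num))
    (hf.differentiable_deriv_two _) (hg.differentiable_deriv_two _) rfl hf' hg' hd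
  simp only [Pi.zero_apply, hlen] at h
  refine h.congr_fderiv ?_
  ext u v
  have hcomb :
      (g 0 - f 0) * (deriv (deriv g) 0 * (u j * v j) - deriv (deriv f) 0 * (u i * v i)) =
      L * (k * (u j * v j) + k * (u i * v i)) := by
    linear_combination (u j * v j) * hg'' - (u i * v i) * hf''
  simp [hcomb, hL.ne']

end Chord

section ClosedChain

variable {n : ℕ} [NeZero n]

local notation "π" => (ContinuousLinearMap.proj : ZMod n → (ZMod n → ℝ) →L[ℝ] ℝ)
local notation:max "𝐞" c:max => (Pi.single c (1 : ℝ) : ZMod n → ℝ)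

theorem sum_shift_mul_shift (u v : ZMod n → ℝ) :
    ∑ j, u (j + 1) * v (j + 1) = ∑ j, u j * v j :=
  Equiv.sum_comp (Equiv.addRight 1) fun j => u j * v j

theorem sum_shift_mul_single (u : ZMod n → ℝ) (q : ZMod n) :
    ∑ j, u (j + 1) * 𝐞 q j = u (q + 1) :=
  dotProduct_single_one (fun j => u (j + 1)) q

theorem sum_single_mul_single (p q : ZMod n) :
    ∑ j, 𝐞 p j * 𝐞 q j = (1 : Matrix (ZMod n) (ZMod n) ℝ) p q := by
  simp [Pi.single_apply, Matrix.one_apply, eq_comm]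

theorem sum_sub_shift_mul_sub_shift_single (p q : ZMod n) :
    ∑ j, (𝐞 p (j + 1) - 𝐞 p j) * (𝐞 q (j + 1) - 𝐞 q j) =
      ((2 : ℝ) • (1 : Matrix (ZMod n) (ZMod n) ℝ) - shiftMat n - (shiftMat n)ᵀ) p q := by
  have hsum : ∑ j, (𝐞 p (j + 1) - 𝐞 p j) * (𝐞 q (j + 1) - 𝐞 q j) =
      2 * ∑ j, 𝐞 p j * 𝐞 q j - ∑ j, 𝐞 p (j + 1) * 𝐞 q j - ∑ j, 𝐞 q (j + 1) * 𝐞 p j := by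
    simp only [sub_mul, mul_sub, Finset.sum_sub_distrib, sum_shift_mul_shift]
    simp only [mul_comm (𝐞 p _) (𝐞 q _)]
    ring
  rw [hsum, sum_shift_mul_single, sum_shift_mul_single, sum_single_mul_single]
  simp [shiftMat, Pi.single_apply, eq_comm]
  ring

noncomputable def chainHessian (L k : ℝ) :
    (ZMod n → ℝ) →L[ℝ] (ZMod n → ℝ) →L[ℝ] ℝ :=
  ∑ p, (L⁻¹ • (π (p + 1) - π p).smulRight (π (p + 1) - π p) +
    k • ((π (p + 1)).smulRight (π (p + 1)) + (π p).smulRight (π p)))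

theorem chainHessian_single {L : ℝ} (hL : L ≠ 0) (k : ℝ) (p q : ZMod n) :
    chainHessian L k (𝐞 p) (𝐞 q) = ((-1 / L) • Amat n (-2 * (1 + L * k))) p q := by
  simp only [chainHessian, _root_.sum_apply, _root_.add_apply, _root_.smul_apply, smulRight_apply,
    _root_.sub_apply, proj_apply, smul_eq_mul, Finset.sum_add_distrib, ← Finset.mul_sum,
    sum_shift_mul_shift, sum_sub_shift_mul_sub_shift_single, sum_single_mul_single]
  simp only [Amat, Matrix.smul_apply, Matrix.add_apply, Matrix.sub_apply, smul_eq_mul]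
  field_simp
  ring

theorem sum_chordLength_fderiv_eq_zero_and_hasFDerivAt_fderiv {F : ZMod n → ℝ → ℝ} {L k : ℝ}
    (hF : ∀ p, ContDiff ℝ 2 (F p)) (hF' : ∀ p, deriv (F p) 0 = 0) (hL : 0 < L)
    (hlen : ∀ p, |F (p + 1) 0 - F p 0| = L)
    (hnext : ∀ p, (F (p + 1) 0 - F p 0) * deriv (deriv (F (p + 1))) 0 = L * k)
    (hprev : ∀ p, (F (p + 1) 0 - F p 0) * deriv (deriv (F p)) 0 = -(L * k)) :
    fderiv ℝ (fun x => ∑ p, chordLength (F p) (F (p + 1)) p (p + 1) x) 0 = 0 ∧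
      HasFDerivAt (fderiv ℝ fun x => ∑ p, chordLength (F p) (F (p + 1)) p (p + 1) x)
        (chainHessian L k) 0 := by
  have hdiff : ∀ p, Differentiable ℝ (F p) := fun p => (hF p).differentiable (by norm_num)
  have hd : ∀ p, F (p + 1) 0 ≠ F p 0 := fun p h => hL.ne (by simpa [h] using hlen p)
  have hev : ∀ p ∈ Finset.univ, ∀ᶠ x in 𝓝 0,
      DifferentiableAt ℝ (chordLength (F p) (F (p + 1)) p (p + 1)) x := fun p _ =>
    eventually_differentiableAt_chordLength (hdiff p) (hdiff (p + 1))
      (chordSq_pos_of_vertical rfl (hd p))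
  refine ⟨?_, hasFDerivAt_fderiv_sum hev fun p _ => hasFDerivAt_fderiv_chordLength_zero
    (hF p) (hF (p + 1)) (hF' p) (hF' (p + 1)) hL (hlen p) (hnext p) (hprev p) p (p + 1)⟩
  rw [fderiv_fun_sum fun p hp => (hev p hp).self_of_nhds]
  exact Finset.sum_eq_zero fun p _ => fderiv_chordLength_of_vertical (hdiff p) (hdiff (p + 1))
    rfl (hF' p) (hF' (p + 1)) (hd p)

end ClosedChain

theorem ZMod.even_val_add_one_iff {r : ℕ} [NeZero (2 * r)] (p : ZMod (2 * r)) :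
    Even (p + 1).val ↔ ¬Even p.val := by
  -- the parity of `val` is the reduction mod 2, a ring hom since `2 ∣ 2 * r`
  have hparity :
      ∀ q : ZMod (2 * r), Even q.val ↔ ZMod.castHom (dvd_mul_right 2 r) (ZMod 2) q = 0 :=
    fun q => by rw [ZMod.castHom_apply, ZMod.cast_eq_val, ZMod.natCast_eq_zero_iff_even]
  rw [hparity, hparity, map_add, map_one]
  generalize ZMod.castHom (dvd_mul_right 2 r) (ZMod 2) p = b
  revert b
  decide

theorem stmt1_general (L : ℝ) (hL : 0 < L) (r : ℕ) [NeZero (2 * r)]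
    (fplus fminus : ℝ → ℝ)
    (hfp : ContDiff ℝ 2 fplus) (hfm : ContDiff ℝ 2 fminus)
    (hp0 : fplus 0 = L / 2) (hm0 : fminus 0 = -L / 2)
    (hp1 : deriv fplus 0 = 0) (hm1 : deriv fminus 0 = 0)
    (hcurv : deriv (deriv fminus) 0 = -(deriv (deriv fplus) 0))
    (F : ZMod (2 * r) → ℝ → ℝ)
    (hF : ∀ p : ZMod (2 * r), F p = if Even p.val then fplus else fminus)
    (𝓛 : (ZMod (2 * r) → ℝ) → ℝ)
    (h𝓛 : ∀ x : ZMod (2 * r) → ℝ, 𝓛 x = ∑ p : ZMod (2 * r),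
      Real.sqrt ((x (p + 1) - x p) ^ 2 + (F (p + 1) (x (p + 1)) - F p (x p)) ^ 2))
    (a : ℝ) (ha : a = -2 * (1 + L * deriv (deriv fplus) 0)) :
    fderiv ℝ 𝓛 0 = 0 ∧
    ∀ p q : ZMod (2 * r),
      iteratedFDeriv ℝ 2 𝓛 0 ![Pi.single p 1, Pi.single q 1] =
        ((-1 / L) • Amat (2 * r) a) p q := by
  obtain rfl : 𝓛 = fun x => ∑ p, chordLength (F p) (F (p + 1)) p (p + 1) x := funext h𝓛
  have hpair (P : (ℝ → ℝ) → (ℝ → ℝ) → Prop) (hpm : P fplus fminus) (hmp : P fminus fplus)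
      (p : ZMod (2 * r)) : P (F p) (F (p + 1)) := by
    simp only [hF, ZMod.even_val_add_one_iff]
    by_cases h : Even p.val <;> simpa [h]
  obtain ⟨hcrit, hhess⟩ := sum_chordLength_fderiv_eq_zero_and_hasFDerivAt_fderiv
    (F := F) (k := deriv (deriv fplus) 0)
    (hpair (fun f _ => ContDiff ℝ 2 f) hfp hfm) (hpair (fun f _ => deriv f 0 = 0) hp1 hm1) hL
    (hpair (fun f g => |g 0 - f 0| = L)
      (by rw [hp0, hm0, abs_eq hL.le]; right; ring) (by rw [hp0, hm0, abs_eq hL.le]; left; ring))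
    (hpair (fun f g => (g 0 - f 0) * deriv (deriv g) 0 = L * deriv (deriv fplus) 0)
      (by rw [hp0, hm0, hcurv]; ring) (by rw [hp0, hm0]; ring))
    (hpair (fun f g => (g 0 - f 0) * deriv (deriv f) 0 = -(L * deriv (deriv fplus) 0))
      (by rw [hp0, hm0]; ring) (by rw [hp0, hm0, hcurv]; ring))
  refine ⟨hcrit, fun p q => ?_⟩
  rw [iteratedFDeriv_two_apply, hhess.fderiv, ha]
  exact chainHessian_single hL.ne' _ p q

/-- The origin is a critical point of the length functional `𝓛` of a closed
polygon with `2r` vertices alternating between the graphs of `f₊` and `f₋`, and its Hessian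
there has matrix `(-1/L) • A(a)` with `a = -2(1 + L f₊''(0))`. -/
theorem stmt1 (L : ℝ) (hL : 0 < L) (r : ℕ) (hr : 1 ≤ r) [NeZero (2 * r)]
    (fplus fminus : ℝ → ℝ)
    (hfp : ContDiff ℝ 2 fplus) (hfm : ContDiff ℝ 2 fminus)
    (hp0 : fplus 0 = L / 2) (hm0 : fminus 0 = -L / 2)
    (hp1 : deriv fplus 0 = 0) (hm1 : deriv fminus 0 = 0)
    (hcurv : deriv (deriv fminus) 0 = -(deriv (deriv fplus) 0))
    (F : ZMod (2 * r) → ℝ → ℝ)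
    (hF : ∀ p : ZMod (2 * r), F p = if Even p.val then fplus else fminus)
    (𝓛 : (ZMod (2 * r) → ℝ) → ℝ)
    (h𝓛 : ∀ x : ZMod (2 * r) → ℝ, 𝓛 x = ∑ p : ZMod (2 * r),
      Real.sqrt ((x (p + 1) - x p) ^ 2 + (F (p + 1) (x (p + 1)) - F p (x p)) ^ 2))
    (a : ℝ) (ha : a = -2 * (1 + L * deriv (deriv fplus) 0)) :
    fderiv ℝ 𝓛 0 = 0 ∧
    ∀ p q : ZMod (2 * r),
      iteratedFDeriv ℝ 2 𝓛 0 ![Pi.single p 1, Pi.single q 1] =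
        ((-1 / L) • Amat (2 * r) a) p q :=
  stmt1_general L hL r fplus fminus hfp hfm hp0 hm0 hp1 hm1 hcurv F hF 𝓛 h𝓛 a ha
end

section
/- Let r ≥ 1 be an integer, L > 0, and a ∈ ℝ with (Polynomial.Chebyshev.T ℝ (2r)).eval (−a/2) ≠ 1. Let H := (−1/L) • A(a), a matrix indexed by ZMod (2r). Define the matrix M indexed by ZMod (2r) by M p q = L · ((Polynomial.Chebyshev.U ℝ (2r − d − 1)).eval (−a/2) + (Polynomial.Chebyshev.U ℝ (d − 1)).eval (−a/2)) / (2·((Polynomial.Chebyshev.T ℝ (2r)).eval (−a/2) − 1)), where d := ((q − p : ZMod (2r))).val. Then H * M = 1 and M * H = 1; that is, H is invertible and the entries h^{pq} of H⁻¹ are given by h^{pq} = (L / (2 (T_{2r}(−a/2) − 1))) (U_{2r−q+p−1}(−a/2) + U_{q−p−1}(−a/2)) for 1 ≤ p ≤ q ≤ 2r. -/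
/-!
The numerator `g(d) = reflectedUSum n d x = U_{n-d-1}(x) + U_{d-1}(x)` (with `n = 2r`,
`x = -a/2`) satisfies the Chebyshev recurrence `g(d+1) + g(d-1) = 2x g(d)` for every integer `d`,
i.e. it is annihilated by `a + S + Sᵀ` as long as no index wraps around `ZMod n`. It is symmetric,
so `g(n) = g(0)` and the wrap-around at `d = n - 1` costs nothing, while at `d = 0` one has
`g(n - 1) = g(-1) + 2 (1 - T_n(x))` because `U_n - U_{n-2} = 2 T_n`. Hence
`A(a) M = (L / (2 (T_n(x) - 1))) · 2 (1 - T_n(x)) · 1 = -L · 1`, so `H M = 1`, and `M H = 1`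
follows for square matrices.
-/

open Matrix Polynomial.Chebyshev

theorem ZMod.val_add_intCast_of_lt {n : ℕ} [NeZero n] (k : ZMod n) {m : ℤ}
    (h₀ : 0 ≤ k.val + m) (h₁ : k.val + m < n) : ((k + m).val : ℤ) = k.val + m := by
  have hk : k + m = ((k.val + m : ℤ) : ZMod n) := by push_cast [ZMod.natCast_zmod_val]; rfl
  rw [hk, ZMod.val_intCast, Int.emod_eq_of_lt h₀ h₁]

section ShiftMatrix

variable {n : ℕ} [NeZero n]

theorem shiftMat_mul_apply (M : Matrix (ZMod n) (ZMod n) ℝ) (p q : ZMod n) :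
    (shiftMat n * M) p q = M (p + 1) q := by
  simp [Matrix.mul_apply, shiftMat]

theorem shiftMat_transpose_mul_apply (M : Matrix (ZMod n) (ZMod n) ℝ) (p q : ZMod n) :
    ((shiftMat n)ᵀ * M) p q = M (p - 1) q := by
  simp [Matrix.mul_apply, shiftMat, eq_comm (a := p), ← eq_sub_iff_add_eq]

theorem Amat_mul_apply (a : ℝ) (M : Matrix (ZMod n) (ZMod n) ℝ) (p q : ZMod n) :
    (Amat n a * M) p q = a * M p q + M (p + 1) q + M (p - 1) q := by
  simp only [Amat, Matrix.add_mul, Matrix.smul_mul, Matrix.one_mul, Matrix.add_apply,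
    Matrix.smul_apply, smul_eq_mul, shiftMat_mul_apply, shiftMat_transpose_mul_apply]

end ShiftMatrix

namespace Polynomial.Chebyshev

variable {R : Type*} [CommRing R]

noncomputable def reflectedUSum (n d : ℤ) (x : R) : R :=
  (U R (n - d - 1)).eval x + (U R (d - 1)).eval x

section

variable (n : ℤ) (x : R)

theorem reflectedUSum_add_one_add_reflectedUSum_sub_one (d : ℤ) :
    reflectedUSum n (d + 1) x + reflectedUSum n (d - 1) x = 2 * x * reflectedUSum n d x := by
  have h₁ := congrArg (eval x) (U_sub_one R (n - d - 1))
  have h₂ := congrArg (eval x) (U_sub_one R (d - 1))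
  simp only [eval_sub, eval_mul, eval_X, eval_ofNat] at h₁ h₂
  simp only [reflectedUSum, show n - (d + 1) - 1 = n - d - 1 - 1 by ring,
    show n - (d - 1) - 1 = n - d - 1 + 1 by ring, show d + 1 - 1 = d - 1 + 1 by ring]
  linear_combination h₁ + h₂

theorem reflectedUSum_self : reflectedUSum n n x = reflectedUSum n 0 x := by
  simp only [reflectedUSum, sub_self, zero_sub, sub_zero, add_comm]

theorem reflectedUSum_sub_one :
    reflectedUSum n (n - 1) x = reflectedUSum n (-1) x + 2 * (1 - (T R n).eval x) := by
  have h := congrArg (eval x) (two_mul_T_eq_U_sub_U R (n - 2))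
  simp only [eval_sub, eval_mul, eval_ofNat, sub_add_cancel] at h
  simp only [reflectedUSum, show n - (n - 1) - 1 = 0 by ring, show n - -1 - 1 = n by ring,
    show (-1 : ℤ) - 1 = -2 by ring, show n - 1 - 1 = n - 2 by ring, U_zero, U_neg_two, eval_one, eval_neg]
  linear_combination h

end

theorem reflectedUSum_val_sub_one_add_val_add_one (n : ℕ) [NeZero n] (x : R) (k : ZMod n) :
    reflectedUSum n (k - 1).val x + reflectedUSum n (k + 1).val x - 2 * x * reflectedUSum n k.val x
      = if k = 0 then 2 * (1 - (T R n).eval x) else 0 := by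
  have hk := k.val_lt
  have h_add : reflectedUSum n (k + 1).val x = reflectedUSum n (k.val + 1) x := by
    rcases (Nat.succ_le_of_lt hk).lt_or_eq with hlt | heq
    · have := k.val_add_intCast_of_lt (m := 1) (by omega) (by omega)
      push_cast at this
      rw [this]
    · have hk1 : k + 1 = 0 := by
        rw [← ZMod.natCast_zmod_val k, ← Nat.cast_succ, heq, ZMod.natCast_self]
      rw [hk1, ZMod.val_zero, Nat.cast_zero, ← Nat.cast_succ, heq, reflectedUSum_self]
  have hrec := reflectedUSum_add_one_add_reflectedUSum_sub_one (n : ℤ) x k.val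
  split_ifs with h0
  · subst h0
    have hn : 0 < n := NeZero.pos n
    have h_sub : (((0 : ZMod n) - 1).val : ℤ) = n - 1 := by
      simpa using (0 : ZMod n).val_add_intCast_of_lt (m := n - 1) (by simp; omega) (by simp)
    rw [h_sub, reflectedUSum_sub_one, h_add]
    simp only [ZMod.val_zero, Nat.cast_zero, zero_sub] at hrec ⊢
    linear_combination hrec
  · have hpos : 0 < k.val := (ZMod.val_pos).2 h0
    have h_sub : ((k - 1).val : ℤ) = k.val - 1 := by
      simpa [sub_eq_add_neg] using k.val_add_intCast_of_lt (m := -1) (by omega) (by omega)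
    rw [h_sub, h_add]
    linear_combination hrec

end Polynomial.Chebyshev

theorem stmt2_general (r : ℕ) [NeZero (2 * r)] (L a : ℝ) (hL : 0 < L)
    (hT : (Polynomial.Chebyshev.T ℝ (2 * r)).eval (-a / 2) ≠ 1)
    (H M : Matrix (ZMod (2 * r)) (ZMod (2 * r)) ℝ)
    (hH : H = (-1 / L) • Amat (2 * r) a)
    (hM : ∀ p q : ZMod (2 * r), M p q =
      L * ((Polynomial.Chebyshev.U ℝ (2 * r - ((q - p).val : ℤ) - 1)).eval (-a / 2) +
           (Polynomial.Chebyshev.U ℝ (((q - p).val : ℤ) - 1)).eval (-a / 2)) /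
        (2 * ((Polynomial.Chebyshev.T ℝ (2 * r)).eval (-a / 2) - 1))) :
    H * M = 1 ∧ M * H = 1 := by
  obtain ⟨x, rfl⟩ : ∃ x, a = -2 * x := ⟨-a / 2, by ring⟩
  simp only [show -(-2 * x) / 2 = x by ring] at hT hM
  have hT' : (T ℝ (2 * r)).eval x - 1 ≠ 0 := sub_ne_zero.2 hT
  have hM' (p q : ZMod (2 * r)) :
      M p q = L * reflectedUSum (2 * r : ℕ) (q - p).val x / (2 * ((T ℝ (2 * r)).eval x - 1)) := by
    rw [hM, reflectedUSum]; push_cast; rfl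
  have hHM : H * M = 1 := by
    ext p q
    have hrec := reflectedUSum_val_sub_one_add_val_add_one (2 * r) x (q - p)
    rw [hH, Matrix.smul_mul, Matrix.smul_apply, Amat_mul_apply, hM', hM', hM', Matrix.one_apply,
      show q - (p + 1) = q - p - 1 by ring, show q - (p - 1) = q - p + 1 by ring]
    simp only [sub_eq_zero, eq_comm (a := q), smul_eq_mul] at hrec ⊢
    push_cast at hrec ⊢
    split_ifs at hrec ⊢ <;> field_simp [hL.ne'] <;> linear_combination -hrec
  exact ⟨hHM, mul_eq_one_comm.1 hHM⟩

/-- The inverse of the Hessian `H = (-1/L) • A(a)` of the length functional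
at the `r`-th iterate of a bouncing ball orbit has entries
`h^{pq} = (L / (2 (T_{2r}(−a/2) − 1))) (U_{2r−q+p−1}(−a/2) + U_{q−p−1}(−a/2))`. -/
theorem stmt2 (r : ℕ) (hr : 1 ≤ r) [NeZero (2 * r)] (L a : ℝ) (hL : 0 < L)
    (hT : (Polynomial.Chebyshev.T ℝ (2 * r)).eval (-a / 2) ≠ 1)
    (H M : Matrix (ZMod (2 * r)) (ZMod (2 * r)) ℝ)
    (hH : H = (-1 / L) • Amat (2 * r) a)
    (hM : ∀ p q : ZMod (2 * r), M p q =
      L * ((Polynomial.Chebyshev.U ℝ (2 * r - ((q - p).val : ℤ) - 1)).eval (-a / 2) +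
           (Polynomial.Chebyshev.U ℝ (((q - p).val : ℤ) - 1)).eval (-a / 2)) /
        (2 * ((Polynomial.Chebyshev.T ℝ (2 * r)).eval (-a / 2) - 1))) :
    H * M = 1 ∧ M * H = 1 :=
  stmt2_general r L a hL hT H M hH hM
end

section
/- Let a ∈ ℝ with a ∉ {0, 2, −2, √2, −√2}. Let A₂ := a•1 + S + Sᵀ as a matrix indexed by ZMod 2 and A₄ := a•1 + S + Sᵀ as a matrix indexed by ZMod 4. Then A₂ and A₄ are invertible, the diagonal entries (A₂⁻¹) 0 0 and (A₄⁻¹) 0 0 are nonzero, and the equality (∑_{q : ZMod 2} ((A₂⁻¹) 0 q)³) / ((A₂⁻¹) 0 0)² = (∑_{q : ZMod 4} ((A₄⁻¹) 0 q)³) / ((A₄⁻¹) 0 0)² holds if and only if a = −1. -/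
open Matrix

/-!
Both matrices are circulant with explicit inverses: `(a² - 4) A₂⁻¹` has first row `(a, -2)` and
`a (a² - 4) A₄⁻¹` has first row `(a² - 2, -a, 2, -a)`. Since `G` is homogeneous of degree one in
the matrix, `G(1)` and `G(2)` are explicit rational functions of `a`, and their difference is
`2 (a + 1) (a - 2)² / (a² (a² - 2)²)`.
-/

theorem Matrix.mul_inv_smul_eq_one {m K : Type*} [Fintype m] [DecidableEq m] [Field K]
    {A B : Matrix m m K} {c : K} (hc : c ≠ 0) (h : A * B = c • 1) : A * (c⁻¹ • B) = 1 := by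
  rw [Matrix.mul_smul, h, smul_smul, inv_mul_cancel₀ hc, one_smul]

theorem Matrix.isUnit_of_mul_eq_smul_one {m K : Type*} [Fintype m] [DecidableEq m] [Field K]
    {A B : Matrix m m K} {c : K} (hc : c ≠ 0) (h : A * B = c • 1) : IsUnit A :=
  (isUnit_iff_isUnit_det A).2 (isUnit_det_of_right_inverse (mul_inv_smul_eq_one hc h))

theorem Matrix.inv_eq_inv_smul_of_mul_eq_smul_one {m K : Type*} [Fintype m] [DecidableEq m]
    [Field K] {A B : Matrix m m K} {c : K} (hc : c ≠ 0) (h : A * B = c • 1) : A⁻¹ = c⁻¹ • B :=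
  inv_eq_right_inv (mul_inv_smul_eq_one hc h)

theorem ZMod.sum_univ_two {M : Type*} [AddCommMonoid M] (f : ZMod 2 → M) :
    ∑ q, f q = f 0 + f 1 :=
  Fin.sum_univ_two f

theorem ZMod.sum_univ_four {M : Type*} [AddCommMonoid M] (f : ZMod 4 → M) :
    ∑ q, f q = f 0 + f 1 + f 2 + f 3 :=
  Fin.sum_univ_four f

theorem ZMod.two_cases (p : ZMod 2) : p = 0 ∨ p = 1 := by
  revert p; decide

theorem ZMod.four_cases (p : ZMod 4) : p = 0 ∨ p = 1 ∨ p = 2 ∨ p = 3 := by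
  revert p; decide

/-- The paper's `G(r)` is `rowCubeRatio (Amat (2 * r) a)⁻¹`. -/
noncomputable def rowCubeRatio {n : ℕ} [NeZero n] (M : Matrix (ZMod n) (ZMod n) ℝ) : ℝ :=
  (∑ q, M 0 q ^ 3) / M 0 0 ^ 2

theorem rowCubeRatio_smul {n : ℕ} [NeZero n] (c : ℝ) (M : Matrix (ZMod n) (ZMod n) ℝ) :
    rowCubeRatio (c • M) = c * rowCubeRatio M := by
  obtain rfl | hc := eq_or_ne c 0
  · simp [rowCubeRatio]
  simp only [rowCubeRatio, Matrix.smul_apply, smul_eq_mul, mul_pow, ← Finset.mul_sum]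
  rw [mul_div_mul_comm, pow_succ, mul_div_cancel_left₀ _ (pow_ne_zero 2 hc)]

noncomputable def amatTwoNum (a : ℝ) : Matrix (ZMod 2) (ZMod 2) ℝ :=
  fun p q => if p = q then a else -2

noncomputable def amatFourNum (a : ℝ) : Matrix (ZMod 4) (ZMod 4) ℝ :=
  fun p q => if p = q then a ^ 2 - 2 else if q = p + 2 then 2 else -a

theorem amat_two_mul_amatTwoNum (a : ℝ) : Amat 2 a * amatTwoNum a = (a ^ 2 - 4) • 1 := by
  ext p q
  rw [mul_apply, ZMod.sum_univ_two]
  rcases ZMod.two_cases p with rfl | rfl <;> rcases ZMod.two_cases q with rfl | rfl <;>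
    simp +decide only [Amat, amatTwoNum, shiftMat, Matrix.add_apply, Matrix.smul_apply,
      transpose_apply, one_apply, smul_eq_mul, ↓reduceIte] <;> ring

theorem amat_four_mul_amatFourNum (a : ℝ) :
    Amat 4 a * amatFourNum a = (a * (a ^ 2 - 4)) • 1 := by
  ext p q
  rw [mul_apply, ZMod.sum_univ_four]
  rcases ZMod.four_cases p with rfl | rfl | rfl | rfl <;>
    rcases ZMod.four_cases q with rfl | rfl | rfl | rfl <;>
    simp +decide only [Amat, amatFourNum, shiftMat, Matrix.add_apply, Matrix.smul_apply,
      transpose_apply, one_apply, smul_eq_mul, ↓reduceIte] <;> ring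

theorem rowCubeRatio_amatTwoNum (a : ℝ) :
    rowCubeRatio (amatTwoNum a) = (a ^ 3 - 8) / a ^ 2 := by
  simp +decide only [rowCubeRatio, ZMod.sum_univ_two, amatTwoNum, ↓reduceIte]
  ring

theorem rowCubeRatio_amatFourNum (a : ℝ) :
    rowCubeRatio (amatFourNum a) = ((a ^ 2 - 2) ^ 3 - 2 * a ^ 3 + 8) / (a ^ 2 - 2) ^ 2 := by
  simp +decide only [rowCubeRatio, ZMod.sum_univ_four, amatFourNum, ↓reduceIte]
  ring

section

variable {a : ℝ}

theorem inv_amat_two (h : a ^ 2 ≠ 4) : (Amat 2 a)⁻¹ = (a ^ 2 - 4)⁻¹ • amatTwoNum a :=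
  inv_eq_inv_smul_of_mul_eq_smul_one (sub_ne_zero.2 h) (amat_two_mul_amatTwoNum a)

theorem inv_amat_four (h0 : a ≠ 0) (h : a ^ 2 ≠ 4) :
    (Amat 4 a)⁻¹ = (a * (a ^ 2 - 4))⁻¹ • amatFourNum a :=
  inv_eq_inv_smul_of_mul_eq_smul_one (mul_ne_zero h0 (sub_ne_zero.2 h))
    (amat_four_mul_amatFourNum a)

theorem inv_amat_two_zero_zero_ne_zero (h0 : a ≠ 0) (h : a ^ 2 ≠ 4) : (Amat 2 a)⁻¹ 0 0 ≠ 0 := by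
  rw [inv_amat_two h, Matrix.smul_apply, smul_eq_mul]
  exact mul_ne_zero (inv_ne_zero (sub_ne_zero.2 h)) h0

theorem inv_amat_four_zero_zero_ne_zero (h0 : a ≠ 0) (h : a ^ 2 ≠ 4) (h2 : a ^ 2 ≠ 2) :
    (Amat 4 a)⁻¹ 0 0 ≠ 0 := by
  rw [inv_amat_four h0 h, Matrix.smul_apply, smul_eq_mul]
  exact mul_ne_zero (inv_ne_zero (mul_ne_zero h0 (sub_ne_zero.2 h)))
    (by simpa [amatFourNum, sub_eq_zero] using h2)

theorem rowCubeRatio_inv_amat_two (h : a ^ 2 ≠ 4) :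
    rowCubeRatio (Amat 2 a)⁻¹ = (a ^ 3 - 8) / (a ^ 2 * (a ^ 2 - 4)) := by
  rw [inv_amat_two h, rowCubeRatio_smul, rowCubeRatio_amatTwoNum, inv_mul_eq_div, div_div]

theorem rowCubeRatio_inv_amat_four (h0 : a ≠ 0) (h : a ^ 2 ≠ 4) :
    rowCubeRatio (Amat 4 a)⁻¹ =
      ((a ^ 2 - 2) ^ 3 - 2 * a ^ 3 + 8) / ((a ^ 2 - 2) ^ 2 * (a * (a ^ 2 - 4))) := by
  rw [inv_amat_four h0 h, rowCubeRatio_smul, rowCubeRatio_amatFourNum, inv_mul_eq_div, div_div]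

theorem rowCubeRatios_eq_iff (h0 : a ≠ 0) (h : a ^ 2 ≠ 4) (h2 : a ^ 2 ≠ 2) :
    (a ^ 3 - 8) / (a ^ 2 * (a ^ 2 - 4)) =
        ((a ^ 2 - 2) ^ 3 - 2 * a ^ 3 + 8) / ((a ^ 2 - 2) ^ 2 * (a * (a ^ 2 - 4))) ↔
      a = -1 := by
  have h2' : a ^ 2 - 2 ≠ 0 := sub_ne_zero.2 h2
  have ha2 : a - 2 ≠ 0 := fun h' => h (by linear_combination (a + 2) * h')
  have hdiff : (a ^ 3 - 8) / (a ^ 2 * (a ^ 2 - 4)) -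
      ((a ^ 2 - 2) ^ 3 - 2 * a ^ 3 + 8) / ((a ^ 2 - 2) ^ 2 * (a * (a ^ 2 - 4))) =
      2 * (a + 1) * (a - 2) ^ 2 / (a ^ 2 * (a ^ 2 - 2) ^ 2) := by
    field_simp
    ring
  rw [← sub_eq_zero, hdiff]
  simp [h0, h2', ha2, add_eq_zero_iff_eq_neg]

end

/-- For `a ∉ {0, 2, −2, √2, −√2}` the matrices `A₂ = A(a)` over `ZMod 2` and
`A₄ = A(a)` over `ZMod 4` are invertible with nonzero diagonal entries of their inverses, and
the equality `G(1) = G(2)` of the normalized cubic row sums of the inverses holds exactly when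
`a = −1`. -/
theorem stmt12 (a : ℝ)
    (ha : a ∉ ({0, 2, -2, Real.sqrt 2, -Real.sqrt 2} : Set ℝ)) :
    IsUnit (Amat 2 a) ∧ IsUnit (Amat 4 a) ∧
    (Amat 2 a)⁻¹ 0 0 ≠ 0 ∧ (Amat 4 a)⁻¹ 0 0 ≠ 0 ∧
    ((∑ q : ZMod 2, ((Amat 2 a)⁻¹ 0 q) ^ 3) / ((Amat 2 a)⁻¹ 0 0) ^ 2 =
      (∑ q : ZMod 4, ((Amat 4 a)⁻¹ 0 q) ^ 3) / ((Amat 4 a)⁻¹ 0 0) ^ 2 ↔ a = -1) := by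
  simp only [Set.mem_insert_iff, Set.mem_singleton_iff, not_or] at ha
  obtain ⟨h0, hp2, hm2, hps, hms⟩ := ha
  have h4 : a ^ 2 ≠ 4 := by
    rw [show (4 : ℝ) = 2 ^ 2 by norm_num, Ne, sq_eq_sq_iff_eq_or_eq_neg]
    tauto
  have h2 : a ^ 2 ≠ 2 := by
    rw [← Real.sq_sqrt zero_le_two, Ne, sq_eq_sq_iff_eq_or_eq_neg]
    tauto
  refine ⟨isUnit_of_mul_eq_smul_one (sub_ne_zero.2 h4) (amat_two_mul_amatTwoNum a),
    isUnit_of_mul_eq_smul_one (mul_ne_zero h0 (sub_ne_zero.2 h4)) (amat_four_mul_amatFourNum a),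
    inv_amat_two_zero_zero_ne_zero h0 h4, inv_amat_four_zero_zero_ne_zero h0 h4 h2, ?_⟩
  change rowCubeRatio _ = rowCubeRatio _ ↔ _
  rw [rowCubeRatio_inv_amat_two h4, rowCubeRatio_inv_amat_four h0 h4]
  exact rowCubeRatios_eq_iff h0 h4 h2
end

section
/- Let f : ℝ → ℂ be smooth (ContDiff ℝ ⊤) and periodic with period 1. For j : ℤ let a_j := ∫ t in (0:ℝ)..1, f t * Complex.exp (−2 * Real.pi * Complex.I * j * t) (the j-th Fourier coefficient of f), and for each natural number n ≥ 1 define g_n : ℝ → ℂ by g_n θ = ∑′ (j : ℤ), a_j * Real.exp (−2 * Real.pi * |j| / n) * Complex.exp (2 * Real.pi * Complex.I * j * θ). Then (i) each g_n is real-analytic on all of ℝ (AnalyticOnNhd ℝ g_n Set.univ), and (ii) for every natural number m, the sequence of functions iteratedDeriv m g_n converges uniformly on ℝ to iteratedDeriv m f as n → ∞. In particular, real-analytic 1-periodic maps are dense in the C^∞ topology among smooth 1-periodic maps. -/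
open Complex Filter Function Set intervalIntegral Real Topology

noncomputable section

namespace Stmt17

def cc (j : ℤ) : ℂ := 2 * (Real.pi : ℂ) * Complex.I * (j : ℂ)

def ee (j : ℤ) (θ : ℝ) : ℂ := Complex.exp (cc j * (θ : ℂ))

def coeffI (h : ℝ → ℂ) (j : ℤ) : ℂ := ∫ t in (0:ℝ)..1, h t * Complex.exp (-(cc j) * (t : ℂ))

def wn (n : ℕ) (j : ℤ) : ℝ := Real.exp (-2 * Real.pi * |(j : ℝ)| / n)

lemma norm_cc (j : ℤ) : ‖cc j‖ = 2 * Real.pi * |(j : ℝ)| := by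
  unfold cc
  simp [norm_mul, Complex.norm_I, Complex.norm_real,
    Complex.norm_intCast, abs_of_pos Real.pi_pos]

lemma hasDerivAt_cexp_mul (c : ℂ) (θ : ℝ) :
    HasDerivAt (fun t : ℝ => Complex.exp (c * (t : ℂ))) (c * Complex.exp (c * (θ : ℂ))) θ := by
  have h1 : HasDerivAt (fun t : ℝ => (t : ℂ)) 1 θ := by
    simpa using (hasDerivAt_id θ).ofReal_comp
  have h2 := (h1.const_mul c).cexp
  simpa [mul_comm] using h2

lemma continuous_cexp_mul (c : ℂ) : Continuous (fun t : ℝ => Complex.exp (c * (t : ℂ))) :=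
  Complex.continuous_exp.comp (continuous_const.mul Complex.continuous_ofReal)

lemma norm_ee (j : ℤ) (θ : ℝ) : ‖ee j θ‖ = 1 := by
  have h : cc j * (θ : ℂ) = ((2 * Real.pi * (j : ℝ) * θ : ℝ) : ℂ) * Complex.I := by
    unfold cc; push_cast; ring
  rw [ee, h, Complex.norm_exp_ofReal_mul_I]

lemma norm_negexp (j : ℤ) (t : ℝ) : ‖Complex.exp (-(cc j) * (t : ℂ))‖ = 1 := by
  have h : -(cc j) * (t : ℂ) = ((-(2 * Real.pi * (j : ℝ) * t) : ℝ) : ℂ) * Complex.I := by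
    unfold cc; push_cast; ring
  rw [h, Complex.norm_exp_ofReal_mul_I]

lemma coeff_bound {h : ℝ → ℂ} (hh : Continuous h) : ∃ C : ℝ, ∀ j, ‖coeffI h j‖ ≤ C := by
  obtain ⟨t₀, -, hmax⟩ := isCompact_Icc.exists_isMaxOn (Set.nonempty_Icc.mpr zero_le_one)
    (hh.norm.continuousOn (s := Set.Icc (0:ℝ) 1))
  refine ⟨‖h t₀‖, fun j => ?_⟩
  have := intervalIntegral.norm_integral_le_of_norm_le_const
    (a := (0:ℝ)) (b := 1) (C := ‖h t₀‖)
    (f := fun t => h t * Complex.exp (-(cc j) * (t : ℂ))) ?_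
  · simpa [coeffI, neg_mul] using this
  · intro x hx
    rw [Set.uIoc_of_le zero_le_one] at hx
    rw [norm_mul, norm_negexp, mul_one]
    exact hmax (Set.mem_Icc.mpr ⟨le_of_lt hx.1, hx.2⟩)

lemma periodic_deriv {h : ℝ → ℂ} (hp : Function.Periodic h 1) :
    Function.Periodic (deriv h) 1 := by
  intro x
  have h1 : (fun y : ℝ => h (y + 1)) = h := funext fun y => hp y
  calc deriv h (x + 1) = deriv (fun y : ℝ => h (y + 1)) x := (deriv_comp_add_const h 1 x).symm
  _ = deriv h x := by rw [h1]

lemma coeff_deriv {h : ℝ → ℂ} (hh : ContDiff ℝ ((⊤:ℕ∞) : WithTop ℕ∞) h) (hp : Function.Periodic h 1) (j : ℤ) :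
    coeffI (deriv h) j = cc j * coeffI h j := by
  have hdiff : Differentiable ℝ h := hh.differentiable (by simp)
  have hcd : Continuous (deriv h) := ((contDiff_infty_iff_deriv.mp hh).2).continuous
  have key := intervalIntegral.integral_mul_deriv_eq_deriv_mul
    (a := (0:ℝ)) (b := 1) (u := h) (u' := deriv h)
    (v := fun t : ℝ => Complex.exp (-(cc j) * (t : ℂ)))
    (v' := fun t : ℝ => -(cc j) * Complex.exp (-(cc j) * (t : ℂ)))
    (fun x _ => (hdiff x).hasDerivAt) (fun x _ => hasDerivAt_cexp_mul _ x)
    (hcd.intervalIntegrable _ _)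
    ((continuous_const.mul (continuous_cexp_mul _)).intervalIntegrable _ _)
  have h10 : h 1 = h 0 := by simpa using hp 0
  have hexp1 : Complex.exp (-(cc j) * ((1:ℝ) : ℂ)) = 1 := by
    have : -(cc j) * ((1:ℝ) : ℂ) = (-j : ℤ) * (2 * (Real.pi : ℂ) * Complex.I) := by
      unfold cc; push_cast; ring
    rw [this, Complex.exp_int_mul_two_pi_mul_I]
  have hexp0 : Complex.exp (-(cc j) * ((0:ℝ) : ℂ)) = 1 := by norm_num
  have hL : (∫ x in (0:ℝ)..1, h x * (-(cc j) * Complex.exp (-(cc j) * (x : ℂ))))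
      = -(cc j) * coeffI h j := by
    rw [coeffI, ← intervalIntegral.integral_const_mul]
    apply intervalIntegral.integral_congr
    intro x _
    ring
  beta_reduce at key
  rw [hL, h10, hexp1, hexp0] at key
  rw [coeffI]
  linear_combination key

lemma iter_smooth {f : ℝ → ℂ} (hf : ContDiff ℝ ((⊤:ℕ∞) : WithTop ℕ∞) f) (m : ℕ) :
    ContDiff ℝ ((⊤:ℕ∞) : WithTop ℕ∞) (iteratedDeriv m f) := by
  induction m with
  | zero => simpa [iteratedDeriv_zero] using hf
  | succ m ih => rw [iteratedDeriv_succ]; exact (contDiff_infty_iff_deriv.mp ih).2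

lemma iter_periodic {f : ℝ → ℂ} (hp : Function.Periodic f 1) (m : ℕ) :
    Function.Periodic (iteratedDeriv m f) 1 := by
  induction m with
  | zero => simpa [iteratedDeriv_zero] using hp
  | succ m ih => rw [iteratedDeriv_succ]; exact periodic_deriv ih

lemma coeff_iter {f : ℝ → ℂ} (hf : ContDiff ℝ ((⊤:ℕ∞) : WithTop ℕ∞) f) (hp : Function.Periodic f 1) (m : ℕ)
    (j : ℤ) : coeffI (iteratedDeriv m f) j = (cc j) ^ m * coeffI f j := by
  induction m with
  | zero => simp [iteratedDeriv_zero]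
  | succ m ih =>
      rw [iteratedDeriv_succ, coeff_deriv (iter_smooth hf m) (iter_periodic hp m), ih,
        pow_succ]
      ring



lemma summable_decay {f : ℝ → ℂ} (hf : ContDiff ℝ ((⊤:ℕ∞) : WithTop ℕ∞) f)
    (hp : Function.Periodic f 1) (m : ℕ) :
    Summable (fun j : ℤ => (2 * Real.pi * |(j : ℝ)|) ^ m * ‖coeffI f j‖) := by
  obtain ⟨C, hC⟩ := coeff_bound (iter_smooth hf (m + 2)).continuous
  have hkey : ∀ j : ℤ, (2 * Real.pi * |(j : ℝ)|) ^ (m + 2) * ‖coeffI f j‖ ≤ C := by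
    intro j
    have := hC j
    rwa [coeff_iter hf hp (m + 2) j, norm_mul, norm_pow, norm_cc] at this
  rw [← Finset.summable_compl_iff ({0} : Finset ℤ)]
  have hsum : Summable (fun x : {x : ℤ // x ∉ ({0} : Finset ℤ)} =>
      (C / (2 * Real.pi) ^ 2) * (1 / ((x : ℤ) : ℝ) ^ 2)) :=
    (((summable_one_div_int_pow (p := 2)).mpr one_lt_two).mul_left _).subtype _
  apply Summable.of_nonneg_of_le _ _ hsum
  · intro x
    positivity
  · rintro ⟨j, hj⟩
    have hj0 : (j : ℝ) ≠ 0 := by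
      simpa using fun h => hj (Finset.mem_singleton.mpr (by exact_mod_cast h))
    have hjpos : (0:ℝ) < (j:ℝ) ^ 2 := by positivity
    have h2pi : (0:ℝ) < (2 * Real.pi) ^ 2 := by positivity
    have habs : (2 * Real.pi * |(j : ℝ)|) ^ 2 = (2 * Real.pi) ^ 2 * (j:ℝ) ^ 2 := by
      rw [mul_pow, _root_.sq_abs]
    have hk := hkey j
    rw [pow_add, habs] at hk
    have : (2 * Real.pi * |(j : ℝ)|) ^ m * ‖coeffI f j‖ * ((2 * Real.pi) ^ 2 * (j:ℝ) ^ 2) ≤ C := by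
      calc (2 * Real.pi * |(j : ℝ)|) ^ m * ‖coeffI f j‖ * ((2 * Real.pi) ^ 2 * (j:ℝ) ^ 2)
        = (2 * Real.pi * |(j : ℝ)|) ^ m * ((2 * Real.pi) ^ 2 * (j:ℝ) ^ 2) * ‖coeffI f j‖ := by ring
      _ ≤ C := hk
    have hfin := (le_div_iff₀ (by positivity : (0:ℝ) < (2 * Real.pi) ^ 2 * (j:ℝ) ^ 2)).mpr this
    calc (2 * Real.pi * |(j : ℝ)|) ^ m * ‖coeffI f j‖
        ≤ C / ((2 * Real.pi) ^ 2 * (j:ℝ) ^ 2) := hfin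
      _ = (C / (2 * Real.pi) ^ 2) * (1 / (j:ℝ) ^ 2) := by
          field_simp


lemma liftIco_eq {h : ℝ → ℂ} (hp : Function.Periodic h 1) (x : ℝ) :
    AddCircle.liftIco 1 0 h (x : AddCircle (1:ℝ)) = h x := by
  have hfr : Int.fract x ∈ Set.Ico (0:ℝ) (0 + 1) := by
    rw [zero_add]
    exact ⟨Int.fract_nonneg x, Int.fract_lt_one x⟩
  have hcoe : (x : AddCircle (1:ℝ)) = ((Int.fract x : ℝ) : AddCircle (1:ℝ)) := by
    rw [QuotientAddGroup.eq]
    refine ⟨-⌊x⌋, ?_⟩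
    simp only [Int.fract, zsmul_eq_mul, Int.cast_neg, mul_one]
    ring
  rw [hcoe, AddCircle.liftIco_coe_apply hfr]
  have := (hp.int_mul ⌊x⌋) (Int.fract x)
  simp only [mul_one] at this
  rw [← this, Int.fract, sub_add_cancel]

lemma inversion {h : ℝ → ℂ} (hh : Continuous h) (hp : Function.Periodic h 1)
    (hs : Summable fun j => ‖coeffI h j‖) (θ : ℝ) :
    HasSum (fun j => coeffI h j * ee j θ) (h θ) := by
  haveI : Fact (0 < (1:ℝ)) := ⟨one_pos⟩
  set H : C(AddCircle (1:ℝ), ℂ) :=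
    ⟨AddCircle.liftIco 1 0 h, AddCircle.liftIco_zero_continuous
      (by simpa using (hp 0).symm) hh.continuousOn⟩ with hH
  have hHx : ∀ x : ℝ, H (x : AddCircle (1:ℝ)) = h x := fun x => liftIco_eq hp x
  have hcoeff : ∀ j : ℤ, fourierCoeff (⇑H) j = coeffI h j := by
    intro j
    rw [fourierCoeff_eq_intervalIntegral (⇑H) j 0]
    rw [show ((1:ℝ)/(1:ℝ)) = 1 by norm_num, one_smul, zero_add, coeffI]
    apply intervalIntegral.integral_congr
    intro x _
    beta_reduce
    rw [smul_eq_mul, fourier_coe_apply, hHx x, mul_comm]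
    congr 1
    push_cast
    unfold cc
    ring
  have hsum : Summable (fourierCoeff (⇑H)) := by
    apply Summable.of_norm
    apply hs.congr
    intro j
    rw [hcoeff j]
  have := has_pointwise_sum_fourier_series_of_summable hsum (θ : AddCircle (1:ℝ))
  rw [hHx θ] at this
  have heq : (fun i : ℤ => fourierCoeff (⇑H) i • (fourier i) ((θ : ℝ) : AddCircle (1:ℝ)))
      = fun j => coeffI h j * ee j θ := by
    funext i
    rw [hcoeff i, smul_eq_mul, fourier_coe_apply]
    congr 1
    unfold ee cc
    push_cast
    ring
  rwa [heq] at this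


lemma wn_pos (n : ℕ) (j : ℤ) : 0 < wn n j := Real.exp_pos _

lemma wn_le_one (n : ℕ) (j : ℤ) : wn n j ≤ 1 := by
  rw [wn, Real.exp_le_one_iff]
  apply div_nonpos_of_nonpos_of_nonneg
  · have : (0:ℝ) ≤ 2 * Real.pi * |(j:ℝ)| := by positivity
    nlinarith
  · positivity

lemma norm_coeff_term (z : ℂ) (j : ℤ) (θ : ℝ) : ‖z * ee j θ‖ = ‖z‖ := by
  rw [norm_mul, norm_ee, mul_one]

lemma norm_cw (n : ℕ) (j : ℤ) (z : ℂ) (k : ℕ) :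
    ‖(cc j) ^ k * (z * ((wn n j : ℝ) : ℂ))‖ = (2 * Real.pi * |(j:ℝ)|) ^ k * (‖z‖ * wn n j) := by
  rw [norm_mul, norm_pow, norm_cc, norm_mul, Complex.norm_real,
    Real.norm_eq_abs, abs_of_pos (wn_pos n j)]

lemma bound_cw (n : ℕ) (j : ℤ) (z : ℂ) (k : ℕ) :
    ‖(cc j) ^ k * (z * ((wn n j : ℝ) : ℂ))‖ ≤ (2 * Real.pi * |(j:ℝ)|) ^ k * ‖z‖ := by
  rw [norm_cw]
  have h1 : ‖z‖ * wn n j ≤ ‖z‖ * 1 :=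
    mul_le_mul_of_nonneg_left (wn_le_one n j) (norm_nonneg z)
  have h2 : (0:ℝ) ≤ (2 * Real.pi * |(j:ℝ)|) ^ k := by positivity
  nlinarith [norm_nonneg z]

lemma gderiv {f : ℝ → ℂ} (hf : ContDiff ℝ ((⊤:ℕ∞) : WithTop ℕ∞) f)
    (hp : Function.Periodic f 1) (n m : ℕ) :
    iteratedDeriv m (fun θ : ℝ => ∑' j : ℤ, coeffI f j * ((wn n j : ℝ) : ℂ) * ee j θ)
    = fun θ : ℝ => ∑' j : ℤ, (cc j) ^ m * (coeffI f j * ((wn n j : ℝ) : ℂ)) * ee j θ := by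
  induction m with
  | zero =>
      rw [iteratedDeriv_zero]
      funext θ
      exact tsum_congr fun j => by rw [pow_zero, one_mul]
  | succ m ih =>
      rw [iteratedDeriv_succ, ih]
      funext θ
      have hds := hasDerivAt_tsum (y₀ := θ)
        (u := fun j : ℤ => (2 * Real.pi * |(j:ℝ)|) ^ (m+1) * ‖coeffI f j‖)
        (g := fun (j : ℤ) (θ : ℝ) => (cc j) ^ m * (coeffI f j * ((wn n j : ℝ) : ℂ)) * ee j θ)
        (g' := fun (j : ℤ) (θ : ℝ) => (cc j) ^ (m+1) * (coeffI f j * ((wn n j : ℝ) : ℂ)) * ee j θ)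
        (summable_decay hf hp (m+1))
        (fun j y => by
          have h1 := (hasDerivAt_cexp_mul (cc j) y).const_mul
            ((cc j) ^ m * (coeffI f j * ((wn n j : ℝ) : ℂ)))
          have h2 : ((cc j) ^ m * (coeffI f j * ((wn n j : ℝ) : ℂ))) *
              ((cc j) * Complex.exp (cc j * (y:ℂ)))
              = (cc j) ^ (m+1) * (coeffI f j * ((wn n j : ℝ) : ℂ)) * ee j y := by
            rw [ee, pow_succ]; ring
          rw [h2] at h1
          exact h1)
        (fun j y => by
          rw [norm_coeff_term]
          exact bound_cw n j _ (m+1))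
        (by
          apply Summable.of_norm_bounded (summable_decay hf hp m)
          intro j
          rw [norm_coeff_term]
          exact bound_cw n j _ m) θ
      exact hds.deriv

lemma frep {f : ℝ → ℂ} (hf : ContDiff ℝ ((⊤:ℕ∞) : WithTop ℕ∞) f)
    (hp : Function.Periodic f 1) (m : ℕ) (θ : ℝ) :
    HasSum (fun j => (cc j) ^ m * coeffI f j * ee j θ) (iteratedDeriv m f θ) := by
  have hsum : Summable fun j => ‖coeffI (iteratedDeriv m f) j‖ := by
    apply (summable_decay hf hp m).congr
    intro j
    rw [coeff_iter hf hp m j, norm_mul, norm_pow, norm_cc]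
  have := inversion (iter_smooth hf m).continuous (iter_periodic hp m) hsum θ
  have heq : (fun j : ℤ => coeffI (iteratedDeriv m f) j * ee j θ)
      = fun j => (cc j) ^ m * coeffI f j * ee j θ := by
    funext j; rw [coeff_iter hf hp m j]
  rwa [heq] at this

end Stmt17

open Stmt17 in
/-- Real-analytic approximation of smooth periodic functions via
Abel/heat-kernel regularization of the Fourier series: if `f` is smooth and `1`-periodic with
Fourier coefficients `a j`, then the functions
`g n θ = ∑' j, a j · e^{−2π|j|/n} · e^{2πijθ}` are real-analytic on `ℝ` and, for every `m`,
`(g n)^{(m)} → f^{(m)}` uniformly on `ℝ` as `n → ∞`. -/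
theorem stmt17 (f : ℝ → ℂ) (hf : ContDiff ℝ (⊤ : ℕ∞) f) (hper : Function.Periodic f 1)
    (a : ℤ → ℂ)
    (ha : ∀ j : ℤ,
      a j = ∫ t in (0:ℝ)..1, f t * Complex.exp (-2 * (Real.pi : ℂ) * Complex.I * (j : ℂ) * (t : ℂ)))
    (g : ℕ → ℝ → ℂ)
    (hg : ∀ n : ℕ, ∀ θ : ℝ, g n θ = ∑' j : ℤ,
      a j * (Real.exp (-2 * Real.pi * |(j : ℝ)| / n) : ℂ) *
        Complex.exp (2 * (Real.pi : ℂ) * Complex.I * (j : ℂ) * (θ : ℂ))) :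
    (∀ n : ℕ, 1 ≤ n → AnalyticOnNhd ℝ (g n) Set.univ) ∧
    (∀ m : ℕ, TendstoUniformly (fun n : ℕ => iteratedDeriv m (g n))
      (iteratedDeriv m f) Filter.atTop) := by
  have hf' : ContDiff ℝ ((⊤:ℕ∞) : WithTop ℕ∞) f := hf.of_le (by simp)
  have haf : a = coeffI f := by
    funext j
    rw [ha j, coeffI]
    apply intervalIntegral.integral_congr
    intro t _
    unfold cc
    push_cast
    ring
  have hgrep : ∀ n : ℕ, g n = fun θ : ℝ => ∑' j : ℤ, coeffI f j * ((wn n j : ℝ) : ℂ) * ee j θ := by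
    intro n
    funext θ
    rw [hg n θ, haf]
    rfl
  have hbnd_nonneg : ∀ m (j : ℤ), 0 ≤ (2 * Real.pi * |(j:ℝ)|) ^ m * ‖coeffI f j‖ := by
    intro m j; positivity
  constructor
  · -- analyticity
    intro n hn
    have hnpos : (0:ℝ) < (n:ℝ) := by exact_mod_cast hn
    have hn0 : (0:ℝ) < 1 / n := by positivity
    set S : Set ℂ := {z : ℂ | |z.im| < 1 / n} with hSdef
    have hSopen : IsOpen S :=
      isOpen_Iio.preimage (_root_.continuous_abs.comp Complex.continuous_im)
    set F : ℤ → ℂ → ℂ := fun j z =>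
      coeffI f j * ((wn n j : ℝ) : ℂ) *
        Complex.exp (2 * (Real.pi:ℂ) * Complex.I * (j:ℂ) * z) with hF
    have hbound0 : Summable (fun j : ℤ => ‖coeffI f j‖) := by
      have := summable_decay hf' hper 0
      simpa using this
    have hterm : ∀ (j : ℤ) (z : ℂ), z ∈ S → ‖F j z‖ ≤ ‖coeffI f j‖ := by
      intro j z hz
      have hre : (2 * (Real.pi:ℂ) * Complex.I * (j:ℂ) * z)
          = ((2 * Real.pi * (j:ℝ) : ℝ) : ℂ) * (z * Complex.I) := by push_cast; ring
      have hnorm : ‖Complex.exp (2 * (Real.pi:ℂ) * Complex.I * (j:ℂ) * z)‖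
          = Real.exp (2 * Real.pi * (j:ℝ) * (-(z.im))) := by
        rw [hre, Complex.norm_exp]
        congr 1
        rw [Complex.re_ofReal_mul, Complex.mul_I_re]
      have himz : |z.im| ≤ 1 / n := le_of_lt hz
      have habsj : |2 * Real.pi * (j:ℝ) * z.im| ≤ 2 * Real.pi * |(j:ℝ)| / n := by
        rw [abs_mul]
        have h1 : |2 * Real.pi * (j:ℝ)| = 2 * Real.pi * |(j:ℝ)| := by
          rw [abs_mul, abs_of_pos (by positivity : (0:ℝ) < 2 * Real.pi)]
        rw [h1]
        calc 2 * Real.pi * |(j:ℝ)| * |z.im| ≤ 2 * Real.pi * |(j:ℝ)| * (1/n) :=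
              mul_le_mul_of_nonneg_left himz (by positivity)
          _ = 2 * Real.pi * |(j:ℝ)| / n := by rw [mul_one_div]
      have hprod : wn n j * Real.exp (2 * Real.pi * (j:ℝ) * (-(z.im)))
          = Real.exp (-2 * Real.pi * |(j:ℝ)| / n + 2 * Real.pi * (j:ℝ) * (-(z.im))) := by
        rw [Real.exp_add, wn]
      have hle1 : wn n j * Real.exp (2 * Real.pi * (j:ℝ) * (-(z.im))) ≤ 1 := by
        rw [hprod, Real.exp_le_one_iff]
        have h2 := neg_abs_le (2 * Real.pi * (j:ℝ) * z.im)
        have h3 : (-2) * Real.pi * |(j:ℝ)| / n = -(2 * Real.pi * |(j:ℝ)| / n) := by ring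
        nlinarith [habsj]
      rw [hF, norm_mul, norm_mul, hnorm, Complex.norm_real, Real.norm_eq_abs,
        abs_of_pos (wn_pos n j), mul_assoc]
      calc ‖coeffI f j‖ * (wn n j * Real.exp (2 * Real.pi * (j:ℝ) * (-(z.im))))
          ≤ ‖coeffI f j‖ * 1 := mul_le_mul_of_nonneg_left hle1 (norm_nonneg _)
        _ = ‖coeffI f j‖ := mul_one _
    have htlu := (tendstoUniformlyOn_tsum hbound0 hterm).tendstoLocallyUniformlyOn
    have hdiffF : ∀ᶠ t : Finset ℤ in atTop, DifferentiableOn ℂ (fun z => ∑ j ∈ t, F j z) S := by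
      refine Filter.Eventually.of_forall fun t => ?_
      apply Differentiable.differentiableOn
      apply Differentiable.fun_sum
      intro j _
      apply Differentiable.mul (differentiable_const _)
      apply Complex.differentiable_exp.comp
      exact (differentiable_const _).mul differentiable_id
    have hdiff : DifferentiableOn ℂ (fun z => ∑' j, F j z) S :=
      htlu.differentiableOn hdiffF hSopen
    have hanal := hdiff.analyticOnNhd hSopen
    intro θ _
    have hθS : ((θ:ℝ) : ℂ) ∈ S := by
      simp only [hSdef, Set.mem_setOf_eq, Complex.ofReal_im, abs_zero]
      exact hn0
    have h1 : AnalyticAt ℝ (fun z : ℂ => ∑' j, F j z) (θ:ℂ) :=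
      (hanal _ hθS).restrictScalars
    have h2 : AnalyticAt ℝ (fun x : ℝ => (x:ℂ)) θ := Complex.ofRealCLM.analyticAt θ
    have h3 := h1.comp h2
    have hgG : g n = (fun z : ℂ => ∑' j, F j z) ∘ (fun x : ℝ => (x:ℂ)) := by
      funext ψ
      rw [hg n ψ, haf]
      rfl
    rw [hgG]
    exact h3
  · -- uniform convergence of derivatives
    intro m
    set bnd : ℤ → ℝ := fun j => (2 * Real.pi * |(j:ℝ)|) ^ m * ‖coeffI f j‖ with hbnddef
    have hbs : Summable bnd := summable_decay hf' hper m
    set δ : ℕ → ℝ := fun n => ∑' j : ℤ, bnd j * (1 - wn n j) with hδdef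
    have hδ0 : Tendsto δ atTop (𝓝 0) := by
      have key := tendsto_tsum_of_dominated_convergence (𝓕 := atTop)
        (f := fun (n : ℕ) (j : ℤ) => bnd j * (1 - wn n j)) (g := fun _ : ℤ => (0:ℝ))
        (bound := bnd) hbs ?_ ?_
      · simpa using key
      · intro j
        have hw : Tendsto (fun n : ℕ => wn n j) atTop (𝓝 1) := by
          have h1 : Tendsto (fun n : ℕ => (-2 * Real.pi * |(j:ℝ)|) / n) atTop (𝓝 0) :=
            tendsto_const_div_atTop_nhds_zero_nat _
          have h2 := (Real.continuous_exp.tendsto 0).comp h1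
          simpa [wn, Function.comp_def] using h2
        have h3 := ((tendsto_const_nhds (x := (1:ℝ)) (f := atTop)).sub hw).const_mul (bnd j)
        simpa using h3
      · refine Filter.Eventually.of_forall fun n j => ?_
        have h1 : 0 ≤ 1 - wn n j := by linarith [wn_le_one n j]
        have h2 : 1 - wn n j ≤ 1 := by linarith [wn_pos n j]
        have hb0 : 0 ≤ bnd j := by rw [hbnddef]; exact hbnd_nonneg m j
        show ‖bnd j * (1 - wn n j)‖ ≤ bnd j
        rw [Real.norm_eq_abs, _root_.abs_of_nonneg (mul_nonneg hb0 h1)]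
        nlinarith [hb0, wn_pos n j]
    have hgm : ∀ n : ℕ, iteratedDeriv m (g n)
        = fun θ : ℝ => ∑' j : ℤ, (cc j) ^ m * (coeffI f j * ((wn n j : ℝ) : ℂ)) * ee j θ := by
      intro n
      rw [hgrep n]
      exact gderiv hf' hper n m
    have hABle : ∀ (n : ℕ) (θ : ℝ) (j : ℤ),
        ‖(cc j) ^ m * (coeffI f j * ((wn n j : ℝ) : ℂ)) * ee j θ
          - (cc j) ^ m * coeffI f j * ee j θ‖ = bnd j * (1 - wn n j) := by
      intro n θ j
      have hAB : (cc j) ^ m * (coeffI f j * ((wn n j : ℝ) : ℂ)) * ee j θ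
          - (cc j) ^ m * coeffI f j * ee j θ
          = ((cc j) ^ m * coeffI f j * ee j θ) * ((((wn n j : ℝ)) : ℂ) - 1) := by ring
      have hw1 : ((((wn n j : ℝ)) : ℂ) - 1) = (((wn n j - 1 : ℝ)) : ℂ) := by push_cast; ring
      rw [hAB, norm_mul, norm_coeff_term, norm_mul, norm_pow, norm_cc, hw1,
        Complex.norm_real, Real.norm_eq_abs,
        abs_of_nonpos (by linarith [wn_le_one n j] : wn n j - 1 ≤ 0)]
      rw [hbnddef]
      ring
    have hsA : ∀ (n : ℕ) (θ : ℝ),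
        Summable fun j : ℤ => (cc j) ^ m * (coeffI f j * ((wn n j : ℝ) : ℂ)) * ee j θ := by
      intro n θ
      apply Summable.of_norm_bounded hbs
      intro j
      rw [norm_coeff_term]
      exact bound_cw n j _ m
    have hsB : ∀ θ : ℝ, Summable fun j : ℤ => (cc j) ^ m * coeffI f j * ee j θ :=
      fun θ => (frep hf' hper m θ).summable
    have hdist : ∀ (n : ℕ) (θ : ℝ),
        ‖iteratedDeriv m (g n) θ - iteratedDeriv m f θ‖ ≤ δ n := by
      intro n θ
      rw [hgm n]
      beta_reduce
      rw [← (frep hf' hper m θ).tsum_eq]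
      rw [← (hsA n θ).tsum_sub (hsB θ)]
      have hnsum : Summable fun j : ℤ =>
          ‖(cc j) ^ m * (coeffI f j * ((wn n j : ℝ) : ℂ)) * ee j θ
            - (cc j) ^ m * coeffI f j * ee j θ‖ := by
        apply Summable.of_nonneg_of_le (fun j => norm_nonneg _) (fun j => ?_) hbs
        rw [hABle n θ j]
        have h1 : 0 ≤ 1 - wn n j := by linarith [wn_le_one n j]
        have hb0 : 0 ≤ bnd j := by rw [hbnddef]; exact hbnd_nonneg m j
        nlinarith [hb0, wn_pos n j]
      calc ‖∑' j : ℤ, ((cc j) ^ m * (coeffI f j * ((wn n j : ℝ) : ℂ)) * ee j θ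
            - (cc j) ^ m * coeffI f j * ee j θ)‖
          ≤ ∑' j : ℤ, ‖(cc j) ^ m * (coeffI f j * ((wn n j : ℝ) : ℂ)) * ee j θ
            - (cc j) ^ m * coeffI f j * ee j θ‖ := norm_tsum_le_tsum_norm hnsum
        _ = δ n := by
            rw [hδdef]
            exact tsum_congr fun j => hABle n θ j
    rw [Metric.tendstoUniformly_iff]
    intro ε hε
    filter_upwards [hδ0.eventually (gt_mem_nhds hε)] with n hn θ
    calc dist (iteratedDeriv m f θ) (iteratedDeriv m (g n) θ)
        = ‖iteratedDeriv m (g n) θ - iteratedDeriv m f θ‖ := by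
          rw [dist_eq_norm, norm_sub_rev]
      _ ≤ δ n := hdist n θ
      _ < ε := hn
end
end
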